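/- The partial derivative of the edge element E with respect to the indeterminate A₂ is given by ∂E/∂A₂ = (1/5)·(−1)^{b₁+b₂}·ζ^{−(b₁+3)·p₁ − (b₂+3)·p₂}·P_{3,p₁}^{b₁}·P_{3,p₂}^{b₂}. -/

import Mathlib

open MvPolynomial

/-- The ring `F = ℂ[L, L⁻¹][A₁, A₁′, A₁″, A₂]`, modelled as polynomials in four variables
(`A₁ = X 0`, `A₁′ = X 1`, `A₁″ = X 2`, `A₂ = X 3`) over the ring of Laurent polynomials
`ℂ[L, L⁻¹]` (with `L = T 1`). -/
noncomputable abbrev F : Type := MvPolynomial (Fin 4) (LaurentPolynomial ℂ)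

/-- The element `L ∈ F`. -/
noncomputable def Lv : F := MvPolynomial.C (LaurentPolynomial.T 1)

/-- The element `L⁻¹ ∈ F`. -/
noncomputable def Lvinv : F := MvPolynomial.C (LaurentPolynomial.T (-1))

/-- The indeterminate `A₁`. -/
noncomputable def A1 : F := MvPolynomial.X 0

/-- The indeterminate `A₁′`. -/
noncomputable def A1' : F := MvPolynomial.X 1

/-- The indeterminate `A₁″`. -/
noncomputable def A1'' : F := MvPolynomial.X 2

/-- The indeterminate `A₂`. -/
noncomputable def A2 : F := MvPolynomial.X 3

/-- `ζ = e^{2πi/5} ∈ ℂ`. -/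
noncomputable def ζ : ℂ := Complex.exp (2 * Real.pi * Complex.I / 5)

/-- The involution `InvFive` on `{0,…,4}` with `InvFive 0 = 0`, `Inv r = 5 − r`, i.e. negation in
`Fin 5`. -/
def InvFive (r : Fin 5) : Fin 5 := -r

/-- The edge element
`E = (1/5)·(−1)^{b₁+b₂}·Σ_{m=0}^{b₂} (−1)^m Σ_{r=0}^{4}
  ζ^{−(b₁+m+1+InvFive r)·p₁ − (b₂−m+r)·p₂} · P_{InvFive r, p₁}^{b₁+m+1} · P_{r, p₂}^{b₂−m}`. -/
noncomputable def edgeE (P : Fin 5 → Fin 5 → ℤ → F) (p₁ p₂ : Fin 5) (b₁ b₂ : ℕ) : F :=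
  ∑ m ∈ Finset.range (b₂ + 1), ∑ r : Fin 5,
    ((1 / 5 : ℂ) * (-1 : ℂ) ^ (b₁ + b₂) * (-1 : ℂ) ^ m *
        ζ ^ (-(((b₁ : ℤ) + (m : ℤ) + 1 + ((InvFive r : ℕ) : ℤ)) * ((p₁ : ℕ) : ℤ))
            - ((b₂ : ℤ) - (m : ℤ) + ((r : ℕ) : ℤ)) * ((p₂ : ℕ) : ℤ))) •
      (P (InvFive r) p₁ ((b₁ : ℤ) + (m : ℤ) + 1) * P r p₂ ((b₂ : ℤ) - (m : ℤ)))

noncomputable def S0 : Subalgebra ℂ F := Algebra.adjoin ℂ {Lv, Lvinv}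
noncomputable def Sf : Subalgebra ℂ F := Algebra.adjoin ℂ {Lv, Lvinv, A1, A1', A1''}

lemma S0_le_Sf : S0 ≤ Sf := Algebra.adjoin_mono (by
  intro x hx
  simp only [Set.mem_insert_iff, Set.mem_singleton_iff] at hx ⊢
  tauto)

lemma pderiv3_algebraMap (c : ℂ) : pderiv (3 : Fin 4) (algebraMap ℂ F c) = 0 := by
  rw [IsScalarTower.algebraMap_apply ℂ (LaurentPolynomial ℂ) F, MvPolynomial.algebraMap_eq, pderiv_C]

lemma pderiv3_Sf {x : F} (hx : x ∈ Sf) : pderiv (3 : Fin 4) x = 0 := by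
  induction hx using Algebra.adjoin_induction with
  | mem x hx =>
    rcases hx with h|h|h|h|h <;> subst h <;>
      simp [Lv, Lvinv, A1, A1', A1'', pderiv_X, pderiv_C, Pi.single_apply]
  | algebraMap r => exact pderiv3_algebraMap r
  | add x y hx hy ihx ihy => rw [map_add, ihx, ihy, add_zero]
  | mul x y hx hy ihx ihy => rw [pderiv_mul, ihx, ihy]; ring

lemma Lv_mul_Lvinv : Lv * Lvinv = 1 := by
  rw [Lv, Lvinv, ← map_mul, ← LaurentPolynomial.T_add]
  norm_num

lemma smul_eq_algebraMap_mul (c : ℂ) (x : F) : c • x = algebraMap ℂ F c * x :=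
  (Algebra.smul_def c x)

section D
variable (D : Derivation ℂ F F) (hDL : D Lv = Lv - (5 ^ 5 : ℂ)⁻¹ • Lv ^ 6)

include hDL in
lemma D_Lvinv : D Lvinv = -(Lvinv * Lvinv) * D Lv := by
  have h := D.leibniz Lv Lvinv
  rw [Lv_mul_Lvinv, Derivation.map_one_eq_zero] at h
  have h2 : Lvinv * (0 : F) = Lvinv * (Lv • D Lvinv + Lvinv • D Lv) := by rw [← h]
  rw [smul_eq_mul, smul_eq_mul, mul_zero, mul_add, ← mul_assoc, mul_comm Lvinv Lv,
    Lv_mul_Lvinv, one_mul] at h2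
  linear_combination -h2

include hDL in
lemma D_mem_S0 {x : F} (hx : x ∈ S0) : D x ∈ S0 := by
  have hLv : Lv ∈ S0 := Algebra.subset_adjoin (by simp)
  have hLvinv : Lvinv ∈ S0 := Algebra.subset_adjoin (by simp)
  have hDLv : D Lv ∈ S0 := by rw [hDL]; exact sub_mem hLv (SMulMemClass.smul_mem _ (pow_mem hLv 6))
  induction hx using Algebra.adjoin_induction with
  | mem x hx =>
    rcases hx with h|h <;> subst h
    · exact hDLv
    · rw [D_Lvinv D hDL]; exact mul_mem (neg_mem (mul_mem hLvinv hLvinv)) hDLv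
  | algebraMap r => rw [Derivation.map_algebraMap]; exact zero_mem _
  | add x y hx hy ihx ihy => rw [map_add]; exact add_mem ihx ihy
  | mul x y hx hy ihx ihy =>
    rw [D.leibniz, smul_eq_mul, smul_eq_mul]
    exact add_mem (mul_mem hx ihy) (mul_mem hy ihx)

end D

lemma CT_mem_S0 (n : ℤ) : (MvPolynomial.C (LaurentPolynomial.T n) : F) ∈ S0 := by
  induction n using Int.induction_on with
  | zero => simpa using one_mem S0
  | succ n ih =>
    have : ((n : ℤ) + 1) = (n : ℤ) + 1 := rfl
    rw [LaurentPolynomial.T_add, map_mul]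
    exact mul_mem ih (Algebra.subset_adjoin (by simp [Lv]))
  | pred n ih =>
    rw [show (-(n : ℤ) - 1) = (-n) + (-1) by ring, LaurentPolynomial.T_add, map_mul]
    exact mul_mem ih (Algebra.subset_adjoin (by simp [Lvinv]))

lemma Cq_mem_S0 (q : LaurentPolynomial ℂ) : (MvPolynomial.C q : F) ∈ S0 := by
  induction q using LaurentPolynomial.induction_on' with
  | add p q hp hq => rw [map_add]; exact add_mem hp hq
  | C_mul_T n a =>
    rw [map_mul]
    refine mul_mem ?_ (CT_mem_S0 n)
    have : (LaurentPolynomial.C a : LaurentPolynomial ℂ) = algebraMap ℂ _ a := rfl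
    rw [this, ← MvPolynomial.algebraMap_eq, ← IsScalarTower.algebraMap_apply ℂ (LaurentPolynomial ℂ) F]
    exact algebraMap_mem _ _

def Good (D : Derivation ℂ F F) (x : F) : Prop := x ∈ Sf ∧ D x ∈ Sf ∧ D (D x) ∈ Sf

section D2
variable (D : Derivation ℂ F F) (hDL : D Lv = Lv - (5 ^ 5 : ℂ)⁻¹ • Lv ^ 6)

include hDL in
lemma good_of_S0 {x : F} (hx : x ∈ S0) : Good D x :=
  ⟨S0_le_Sf hx, S0_le_Sf (D_mem_S0 D hDL hx), S0_le_Sf (D_mem_S0 D hDL (D_mem_S0 D hDL hx))⟩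

lemma good_add {x y : F} (hx : Good D x) (hy : Good D y) : Good D (x + y) :=
  ⟨add_mem hx.1 hy.1, by rw [map_add]; exact add_mem hx.2.1 hy.2.1,
    by rw [map_add, map_add]; exact add_mem hx.2.2 hy.2.2⟩

lemma good_mul {x y : F} (hx : Good D x) (hy : Good D y) : Good D (x * y) := by
  refine ⟨mul_mem hx.1 hy.1, ?_, ?_⟩
  · rw [D.leibniz, smul_eq_mul, smul_eq_mul]
    exact add_mem (mul_mem hx.1 hy.2.1) (mul_mem hy.1 hx.2.1)
  · rw [D.leibniz, smul_eq_mul, smul_eq_mul, map_add, D.leibniz, D.leibniz,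
      smul_eq_mul, smul_eq_mul, smul_eq_mul, smul_eq_mul]
    exact add_mem (add_mem (mul_mem hx.1 hy.2.2) (mul_mem hy.2.1 hx.2.1))
      (add_mem (mul_mem hy.1 hx.2.2) (mul_mem hx.2.1 hy.2.1))

lemma good_A1 (hDA1 : D A1 = A1') (hDA1' : D A1' = A1'') : Good D A1 := by
  refine ⟨Algebra.subset_adjoin (by simp), ?_, ?_⟩
  · rw [hDA1]; exact Algebra.subset_adjoin (by simp)
  · rw [hDA1, hDA1']; exact Algebra.subset_adjoin (by simp)

end D2

lemma pderiv3_smul (c : ℂ) (x : F) :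
    pderiv (3 : Fin 4) (c • x) = c • pderiv (3 : Fin 4) x := by
  rw [smul_eq_algebraMap_mul, smul_eq_algebraMap_mul, pderiv_mul, pderiv3_algebraMap]
  ring

lemma pderiv3_A2 : pderiv (3 : Fin 4) A2 = 1 := pderiv_X_self _

lemma pderiv3_Lvinv : pderiv (3 : Fin 4) Lvinv = 0 := pderiv_C

set_option maxHeartbeats 1600000 in
/-- `∂E/∂A₂ = (1/5)·(−1)^{b₁+b₂}·ζ^{−(b₁+3)p₁ − (b₂+3)p₂}·P_{3,p₁}^{b₁}·P_{3,p₂}^{b₂}`. -/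
theorem stmt12
    (D : Derivation ℂ F F)
    (hDL : D Lv = Lv - (5 ^ 5 : ℂ)⁻¹ • Lv ^ 6)
    (hDA1 : D A1 = A1')
    (hDA1' : D A1' = A1'')
    (hDA2 : D A2 = Lv * A1 ^ 2 + Lv * A2 ^ 2 - A1'
      - 15 * (1 - (5 ^ 5 : ℂ)⁻¹ • Lv ^ 5) * ((5 ^ 5 : ℂ)⁻¹ • Lv ^ 5))
    (q : Fin 5 → ℤ → LaurentPolynomial ℂ)
    (hq : ∀ (j : Fin 5) (k : ℤ), k < 0 → q j k = 0)
    (P : Fin 5 → Fin 5 → ℤ → F)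
    (hPneg : ∀ (i j : Fin 5) (k : ℤ), k < 0 → P i j k = 0)
    (hP0 : ∀ (j : Fin 5) (k : ℤ), P 0 j k = MvPolynomial.C (q j k))
    (hP4 : ∀ (j : Fin 5) (k : ℤ),
      P 4 j k = P 0 j k + Lvinv * D (P 0 j (k - 1)))
    (hP3 : ∀ (j : Fin 5) (k : ℤ),
      P 3 j k = P 4 j k + Lvinv * D (P 4 j (k - 1)) + A1 * P 4 j (k - 1))
    (hP2 : ∀ (j : Fin 5) (k : ℤ),
      P 2 j k = P 3 j k + Lvinv * D (P 3 j (k - 1)) + A2 * P 3 j (k - 1))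
    (hP1 : ∀ (j : Fin 5) (k : ℤ),
      P 1 j k = P 2 j k + Lvinv * D (P 2 j (k - 1)) - A2 * P 2 j (k - 1))
    (p₁ p₂ : Fin 5) (b₁ b₂ : ℕ) :
    (MvPolynomial.pderiv (3 : Fin 4)) (edgeE P p₁ p₂ b₁ b₂)
      = ((1 / 5 : ℂ) * (-1 : ℂ) ^ (b₁ + b₂) *
            ζ ^ (-(((b₁ : ℤ) + 3) * ((p₁ : ℕ) : ℤ)) - ((b₂ : ℤ) + 3) * ((p₂ : ℕ) : ℤ))) •
          (P 3 p₁ (b₁ : ℤ) * P 3 p₂ (b₂ : ℤ)) := by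
  have hLvinvS0 : Lvinv ∈ S0 := Algebra.subset_adjoin (by simp)
  have hP0S0 : ∀ j k, P 0 j k ∈ S0 := fun j k => by rw [hP0]; exact Cq_mem_S0 _
  have hP4S0 : ∀ j k, P 4 j k ∈ S0 := fun j k => by
    rw [hP4]; exact add_mem (hP0S0 j k) (mul_mem hLvinvS0 (D_mem_S0 D hDL (hP0S0 j (k-1))))
  have hP3good : ∀ j k, Good D (P 3 j k) := fun j k => by
    rw [hP3]
    exact good_add D (good_add D (good_of_S0 D hDL (hP4S0 j k))
      (good_of_S0 D hDL (mul_mem hLvinvS0 (D_mem_S0 D hDL (hP4S0 j (k-1))))))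
      (good_mul D (good_A1 D hDA1 hDA1') (good_of_S0 D hDL (hP4S0 j (k-1))))
  have dP3 : ∀ j k, pderiv (3 : Fin 4) (P 3 j k) = 0 := fun j k => pderiv3_Sf (hP3good j k).1
  have dDP3 : ∀ j k, pderiv (3 : Fin 4) (D (P 3 j k)) = 0 := fun j k =>
    pderiv3_Sf (hP3good j k).2.1
  have dDDP3 : ∀ j k, pderiv (3 : Fin 4) (D (D (P 3 j k))) = 0 := fun j k =>
    pderiv3_Sf (hP3good j k).2.2
  have dP4 : ∀ j k, pderiv (3 : Fin 4) (P 4 j k) = 0 := fun j k =>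
    pderiv3_Sf (S0_le_Sf (hP4S0 j k))
  have dP0 : ∀ j k, pderiv (3 : Fin 4) (P 0 j k) = 0 := fun j k =>
    pderiv3_Sf (S0_le_Sf (hP0S0 j k))
  have dDLvinv : pderiv (3 : Fin 4) (D Lvinv) = 0 :=
    pderiv3_Sf (S0_le_Sf (D_mem_S0 D hDL hLvinvS0))
  have hLvSf : Lv ∈ Sf := Algebra.subset_adjoin (by simp)
  have dDA2 : pderiv (3 : Fin 4) (D A2) = 2 * (Lv * A2) := by
    rw [hDA2]
    have h1 : pderiv (3 : Fin 4) (Lv * A1 ^ 2) = 0 :=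
      pderiv3_Sf (mul_mem hLvSf (pow_mem (Algebra.subset_adjoin (by simp)) 2))
    have h2 : pderiv (3 : Fin 4) A1' = 0 := pderiv3_Sf (Algebra.subset_adjoin (by simp))
    have h3 : pderiv (3 : Fin 4)
        (15 * (1 - (5 ^ 5 : ℂ)⁻¹ • Lv ^ 5) * ((5 ^ 5 : ℂ)⁻¹ • Lv ^ 5)) = 0 := by
      refine pderiv3_Sf (mul_mem (mul_mem ?_ ?_) ?_)
      · exact Subalgebra.natCast_mem _ 15
      · exact sub_mem (one_mem _) (SMulMemClass.smul_mem _ (pow_mem hLvSf 5))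
      · exact SMulMemClass.smul_mem _ (pow_mem hLvSf 5)
    rw [map_sub, map_sub, map_add, h1, h2, h3, pderiv_mul, pow_two, pderiv_mul, pderiv3_A2,
      pderiv3_Sf hLvSf]
    ring
  have dP2 : ∀ j k, pderiv (3 : Fin 4) (P 2 j k) = P 3 j (k - 1) := fun j k => by
    rw [hP2, map_add, map_add, pderiv_mul, pderiv_mul, dP3, dDP3, pderiv3_Lvinv, pderiv3_A2,
      dP3]
    ring
  have dP1 : ∀ j k, pderiv (3 : Fin 4) (P 1 j k) = 0 := fun j k => by
    have hD2 : D (P 2 j (k - 1)) = D (P 3 j (k - 1))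
        + (Lvinv * D (D (P 3 j (k - 1 - 1))) + D (P 3 j (k - 1 - 1)) * D Lvinv)
        + (A2 * D (P 3 j (k - 1 - 1)) + P 3 j (k - 1 - 1) * D A2) := by
      rw [hP2 j (k - 1), map_add, map_add, D.leibniz, D.leibniz, smul_eq_mul, smul_eq_mul,
        smul_eq_mul, smul_eq_mul]
    rw [hP1 j k, map_sub, map_add, pderiv_mul, pderiv_mul, dP2, dP2, pderiv3_Lvinv, pderiv3_A2, hD2,
      map_add, map_add, map_add, map_add, pderiv_mul, pderiv_mul, pderiv_mul, pderiv_mul,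
      dDP3, dDP3, dDDP3, pderiv3_Lvinv, dDLvinv, pderiv3_A2, dP3, dDA2, hP2 j (k - 1)]
    linear_combination (2 * A2 * P 3 j (k - 1 - 1)) * Lv_mul_Lvinv
  have hsum : (pderiv (3 : Fin 4)) (edgeE P p₁ p₂ b₁ b₂)
      = ∑ m ∈ Finset.range (b₂ + 1),
        ((fun n : ℕ => ((1 / 5 : ℂ) * (-1 : ℂ) ^ (b₁ + b₂) * (-1 : ℂ) ^ n *
            ζ ^ (-(((b₁ : ℤ) + (n : ℤ) + 3) * ((p₁ : ℕ) : ℤ))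
              - ((b₂ : ℤ) - (n : ℤ) + 3) * ((p₂ : ℕ) : ℤ))) •
          (P 3 p₁ ((b₁ : ℤ) + (n : ℤ)) * P 3 p₂ ((b₂ : ℤ) - (n : ℤ)))) m
        - (fun n : ℕ => ((1 / 5 : ℂ) * (-1 : ℂ) ^ (b₁ + b₂) * (-1 : ℂ) ^ n *
            ζ ^ (-(((b₁ : ℤ) + (n : ℤ) + 3) * ((p₁ : ℕ) : ℤ))
              - ((b₂ : ℤ) - (n : ℤ) + 3) * ((p₂ : ℕ) : ℤ))) •
          (P 3 p₁ ((b₁ : ℤ) + (n : ℤ)) * P 3 p₂ ((b₂ : ℤ) - (n : ℤ)))) (m + 1)) := by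
    rw [edgeE, map_sum]
    refine Finset.sum_congr rfl fun m hm => ?_
    rw [map_sum, Fin.sum_univ_five]
    simp only [show InvFive 0 = 0 from rfl, show InvFive 1 = 4 from rfl,
      show InvFive 2 = 3 from rfl, show InvFive 3 = 2 from rfl, show InvFive 4 = 1 from rfl,
      show (((0 : Fin 5) : ℕ) : ℤ) = 0 from rfl, show (((1 : Fin 5) : ℕ) : ℤ) = 1 from rfl,
      show (((2 : Fin 5) : ℕ) : ℤ) = 2 from rfl, show (((3 : Fin 5) : ℕ) : ℤ) = 3 from rfl,
      show (((4 : Fin 5) : ℕ) : ℤ) = 4 from rfl]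
    rw [pderiv3_smul, pderiv3_smul, pderiv3_smul, pderiv3_smul, pderiv3_smul,
      pderiv_mul, pderiv_mul, pderiv_mul, pderiv_mul, pderiv_mul,
      dP0, dP0, dP4, dP1, dP2, dP3, dP2, dP3, dP1, dP4]
    simp only [mul_zero, zero_mul, add_zero, zero_add, smul_zero]
    rw [show (-(((b₁:ℤ) + (m:ℤ) + 1 + 3) * ((p₁:ℕ):ℤ)) - ((b₂:ℤ) - (m:ℤ) + 2) * ((p₂:ℕ):ℤ))
          = (-(((b₁:ℤ) + ((m+1:ℕ):ℤ) + 3) * ((p₁:ℕ):ℤ))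
            - ((b₂:ℤ) - ((m+1:ℕ):ℤ) + 3) * ((p₂:ℕ):ℤ)) from by push_cast; ring,
      show (-(((b₁:ℤ) + (m:ℤ) + 1 + 2) * ((p₁:ℕ):ℤ)) - ((b₂:ℤ) - (m:ℤ) + 3) * ((p₂:ℕ):ℤ))
          = (-(((b₁:ℤ) + (m:ℤ) + 3) * ((p₁:ℕ):ℤ))
            - ((b₂:ℤ) - (m:ℤ) + 3) * ((p₂:ℕ):ℤ)) from by push_cast; ring,
      show ((b₁:ℤ) + (m:ℤ) + 1 - 1) = (b₁:ℤ) + (m:ℤ) from by ring,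
      show ((b₂:ℤ) - (m:ℤ) - 1) = (b₂:ℤ) - ((m+1:ℕ):ℤ) from by push_cast; ring,
      show ((b₁:ℤ) + (m:ℤ) + 1) = (b₁:ℤ) + ((m+1:ℕ):ℤ) from by push_cast; ring]
    module
  rw [hsum, Finset.sum_range_sub']
  rw [show P 3 p₂ ((b₂:ℤ) - ((b₂+1:ℕ):ℤ)) = 0 from hPneg _ _ _ (by push_cast; omega),
    mul_zero, smul_zero, sub_zero]
  simp only [Nat.cast_zero, add_zero, sub_zero, pow_zero, mul_one]
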